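/- Let p be an odd prime and S a nondegenerate symmetric m×m matrix over F_p with m even. The number of row vectors x in F_p^m with x S xᵀ = 0 equals p^{m/2-1}(p^{m/2} - χ(S)) + p^{m/2} χ(S), where χ(S) = legendreSym p ((-1)^{m/2} det S). -/

import Mathlib

open Matrix Finset

/-!
Congruence turns `x S xᵀ` into `Q(x) = ∑ wᵢ xᵢ²` with `∏ wᵢ = (det P)² det S`. For a primitive
additive character `ψ`, `p · #{Q = 0} = ∑_t ∑_x ψ(t Q(x))`. The term `t = 0` gives `p^m`; for `t ≠ 0` the
inner sum factors into quadratic Gauss sums `∑_c ψ(a c²) = χ(a) g` with `g² = χ(-1) p`, so for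
`m = 2k` it equals `χ((-1)^k ∏ wᵢ) p^k`, independently of `t`.
-/

theorem Matrix.IsSymm.exists_isUnit_det_transpose_mul_mul_eq_diagonal {K n : Type*} [Field K]
    [Invertible (2 : K)] [Fintype n] [DecidableEq n] {S : Matrix n n K} (hS : S.IsSymm) :
    ∃ (P : Matrix n n K) (w : n → K), IsUnit P.det ∧ Pᵀ * S * P = diagonal w := by
  obtain ⟨v, hv⟩ := LinearMap.BilinForm.exists_orthogonal_basis
    (LinearMap.BilinForm.isSymm_iff.mp (isSymm_toBilin'_iff_isSymm.mpr hS))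
  obtain ⟨e⟩ : Nonempty (Fin (Module.finrank K (n → K)) ≃ n) := Fintype.card_eq.mp (by simp)
  let b := v.reindex e
  have hb : ∀ i j, i ≠ j → S.toBilin' (b i) (b j) = 0 := fun i j hij => by
    rw [Module.Basis.reindex_apply, Module.Basis.reindex_apply]
    exact hv (e.symm.injective.ne hij)
  refine ⟨(Pi.basisFun K n).toMatrix b, fun i => S.toBilin' (b i) (b i), ?_, ?_⟩
  · have := (Pi.basisFun K n).invertibleToMatrix b
    exact isUnit_det_of_invertible _
  · have h := LinearMap.BilinForm.toMatrix_mul_basis_toMatrix (Pi.basisFun K n) b S.toBilin'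
    rw [LinearMap.BilinForm.toMatrix_basisFun, LinearMap.BilinForm.toMatrix'_toBilin'] at h
    rw [h]
    ext i j
    rw [LinearMap.BilinForm.toMatrix_apply]
    rcases eq_or_ne i j with rfl | hij
    · simp
    · rw [diagonal_apply_ne _ hij, hb i j hij]

theorem Matrix.dotProduct_transpose_mul_mul_mulVec {R n : Type*} [CommRing R] [Fintype n]
    (S P : Matrix n n R) (x : n → R) :
    x ⬝ᵥ (Pᵀ * S * P) *ᵥ x = (P *ᵥ x) ⬝ᵥ S *ᵥ (P *ᵥ x) := by
  rw [← mulVec_mulVec, ← mulVec_mulVec, dotProduct_mulVec, vecMul_transpose]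

theorem Matrix.card_dotProduct_transpose_mul_mul_mulVec_eq_zero {R n : Type*} [CommRing R]
    [Fintype R] [DecidableEq R] [Fintype n] [DecidableEq n] (S : Matrix n n R)
    {P : Matrix n n R} (hP : IsUnit P.det) :
    Fintype.card {x : n → R // x ⬝ᵥ (Pᵀ * S * P) *ᵥ x = 0} =
      Fintype.card {x : n → R // x ⬝ᵥ S *ᵥ x = 0} := by
  have hsurj : Function.Surjective (P *ᵥ ·) :=
    mulVec_surjective_iff_isUnit.mpr ((isUnit_iff_isUnit_det P).mpr hP)
  let e := Equiv.ofBijective _ ⟨Finite.injective_iff_surjective.mpr hsurj, hsurj⟩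
  exact Fintype.card_congr <| e.subtypeEquiv fun x => by
    rw [dotProduct_transpose_mul_mul_mulVec]; rfl

theorem Matrix.dotProduct_diagonal_mulVec_self {R n : Type*} [CommRing R] [Fintype n]
    [DecidableEq n] (w x : n → R) : x ⬝ᵥ diagonal w *ᵥ x = ∑ i, w i * x i ^ 2 := by
  simp only [dotProduct, mulVec_diagonal]
  exact sum_congr rfl fun i _ => by ring

theorem AddChar.card_eq_zero_mul_card_eq_sum {R R' α : Type*} [CommRing R] [Fintype R]
    [DecidableEq R] [CommRing R'] [IsDomain R'] [Fintype α] {ψ : AddChar R R'}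
    (hψ : ψ.IsPrimitive) (f : α → R) :
    (Fintype.card {a // f a = 0} : R') * Fintype.card R = ∑ t, ∑ a, ψ (t * f a) := by
  rw [sum_comm]
  simp_rw [sum_mulShift _ hψ, apply_ite (Nat.cast : ℕ → R'), Nat.cast_zero]
  rw [sum_ite, sum_const_zero, add_zero, sum_const, nsmul_eq_mul, Fintype.card_subtype]

lemma AddChar.map_sum_eq_prod {A M ι : Type*} [AddCommMonoid A] [CommMonoid M]
    (ψ : AddChar A M) (s : Finset ι) (f : ι → A) : ψ (∑ i ∈ s, f i) = ∏ i ∈ s, ψ (f i) := by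
  classical
  induction s using Finset.induction_on with
  | empty => simp
  | insert _ _ h ih => rw [sum_insert h, prod_insert h, AddChar.map_add_eq_mul, ih]

section QuadraticGaussSum

variable {F R : Type*} [Field F] [Fintype F] [DecidableEq F] [CommRing R] [IsDomain R]
  {ψ : AddChar F R}

theorem sum_addChar_mul_sq (hF : ringChar F ≠ 2) (hψ : ψ.IsPrimitive) {a : F} (ha : a ≠ 0) :
    ∑ c, ψ (a * c ^ 2) =
      quadraticChar F a * gaussSum ((quadraticChar F).ringHomComp (Int.castRingHom R)) ψ := by
  set χ := (quadraticChar F).ringHomComp (Int.castRingHom R)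
  have hχ : χ⁻¹ = χ := ((quadraticChar_isQuadratic F).comp _).inv
  calc ∑ c, ψ (a * c ^ 2)
      = ∑ y, (#{c | c ^ 2 = y} : R) * ψ (a * y) := by
        rw [← sum_fiberwise univ (· ^ 2)]
        refine sum_congr rfl fun y _ => ?_
        rw [← nsmul_eq_mul, ← sum_const]
        exact sum_congr rfl fun c hc => by rw [(mem_filter.mp hc).2]
    _ = ∑ y, ((quadraticChar F y : R) + 1) * ψ (a * y) := by
        refine sum_congr rfl fun y _ => congrArg (· * ψ (a * y)) ?_
        have h := congrArg (Int.cast : ℤ → R) (quadraticChar_card_sqrts hF y)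
        push_cast [Set.toFinset_ofPred] at h
        convert h
    _ = gaussSum χ (ψ.mulShift a) + ∑ y, ψ (y * a) := by
        simp only [add_mul, one_mul, sum_add_distrib, mul_comm _ a]
        rfl
    _ = quadraticChar F a * gaussSum χ ψ := by
        rw [AddChar.sum_mulShift a hψ, if_neg ha, Nat.cast_zero, add_zero,
          ← Units.val_mk0 ha, gaussSum_mulShift_eq, hχ]
        rfl

theorem sum_addChar_sum_mul_sq [CharZero R] (hF : ringChar F ≠ 2) (hψ : ψ.IsPrimitive)
    {n : Type*} [Fintype n] [DecidableEq n] {k : ℕ} (hn : Fintype.card n = 2 * k) {w : n → F}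
    (hw : ∀ i, w i ≠ 0) :
    ∑ x : n → F, ψ (∑ i, w i * x i ^ 2) =
      quadraticChar F ((-1) ^ k * ∏ i, w i) * (Fintype.card F : R) ^ k := by
  set χ := (quadraticChar F).ringHomComp (Int.castRingHom R)
  have hG : gaussSum χ ψ ^ 2 = quadraticChar F (-1) * (Fintype.card F : R) :=
    gaussSum_sq ((MulChar.ringHomComp_ne_one_iff (RingHom.injective_int _)).mpr
      (quadraticChar_ne_one hF)) ((quadraticChar_isQuadratic F).comp _) hψ
  calc ∑ x : n → F, ψ (∑ i, w i * x i ^ 2)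
      = ∏ i, ∑ c, ψ (w i * c ^ 2) := by
        simp only [AddChar.map_sum_eq_prod, Fintype.prod_sum]
    _ = ∏ i, (quadraticChar F (w i) * gaussSum χ ψ) :=
        prod_congr rfl fun i _ => sum_addChar_mul_sq hF hψ (hw i)
    _ = quadraticChar F ((-1) ^ k * ∏ i, w i) * (Fintype.card F : R) ^ k := by
        rw [prod_mul_distrib, prod_const, card_univ, hn, pow_mul, hG, ← Int.cast_prod,
          ← map_prod, map_mul, map_pow]
        push_cast
        ring

end QuadraticGaussSum

theorem card_sum_mul_sq_eq_zero {F n : Type*} [Field F] [Fintype F] [DecidableEq F]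
    (hF : ringChar F ≠ 2) [Fintype n] [DecidableEq n] {k : ℕ} (hn : Fintype.card n = 2 * k)
    {w : n → F} (hw : ∀ i, w i ≠ 0) :
    (Fintype.card {x : n → F // ∑ i, w i * x i ^ 2 = 0} : ℤ) * Fintype.card F =
      Fintype.card F ^ (2 * k) +
        (Fintype.card F - 1) * quadraticChar F ((-1) ^ k * ∏ i, w i) * Fintype.card F ^ k := by
  obtain ⟨ψ, hψ⟩ : ∃ ψ : AddChar F ℂ, ψ.IsPrimitive :=
    ⟨_, AddChar.FiniteField.primitiveChar_to_Complex_isPrimitive F⟩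
  have hsum : ∀ t ≠ 0, ∑ x : n → F, ψ (t * ∑ i, w i * x i ^ 2) =
      quadraticChar F ((-1) ^ k * ∏ i, w i) * (Fintype.card F : ℂ) ^ k := by
    intro t ht
    have hprod : ∏ i, t * w i = (t ^ k) ^ 2 * ∏ i, w i := by
      rw [prod_mul_distrib, prod_const, card_univ, hn, ← pow_mul, mul_comm k]
    simp_rw [mul_sum, ← mul_assoc]
    rw [sum_addChar_sum_mul_sq hF hψ hn fun i => mul_ne_zero ht (hw i), hprod, mul_left_comm,
      map_mul _ (_ ^ 2), quadraticChar_sq_one' (pow_ne_zero k ht), one_mul]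
  have hzero : ∑ x : n → F, ψ (0 * ∑ i, w i * x i ^ 2) = (Fintype.card F : ℂ) ^ (2 * k) := by
    simp [Fintype.card_pi, hn]
  apply Int.cast_injective (α := ℂ)
  push_cast
  rw [AddChar.card_eq_zero_mul_card_eq_sum hψ, ← add_sum_erase _ _ (mem_univ 0), hzero,
    sum_congr rfl fun t ht => hsum t (ne_of_mem_erase ht), sum_const,
    card_erase_of_mem (mem_univ 0), card_univ, nsmul_eq_mul, Nat.cast_sub Fintype.card_pos]
  push_cast
  ring

/-- Lemma 5.1 (2), even case: for `p` an odd prime and `S` a nondegenerate symmetric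
`m × m` matrix over `F_p` with `m` even, the number of row vectors `x` with
`x S xᵀ = 0` equals `p^(m/2-1)(p^(m/2) - χ(S)) + p^(m/2) χ(S)`, where
`χ(S) = ((-1)^(m/2) det S / p)`. -/
theorem card_zero_repr_even_rank (p m : ℕ) [Fact p.Prime] (hp : p ≠ 2) (hm : Even m)
    (hm0 : 0 < m) (S : Matrix (Fin m) (Fin m) (ZMod p)) (hS : Sᵀ = S)
    (hSdet : IsUnit S.det) :
    (Fintype.card {x : Fin m → ZMod p // dotProduct x (S.mulVec x) = 0} : ℤ) =
      (p : ℤ) ^ (m / 2 - 1) *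
        ((p : ℤ) ^ (m / 2) - legendreSym p (((-1 : ZMod p) ^ (m / 2) * S.det).val)) +
      (p : ℤ) ^ (m / 2) * legendreSym p (((-1 : ZMod p) ^ (m / 2) * S.det).val) := by
  have hchar : ringChar (ZMod p) ≠ 2 := by rwa [ZMod.ringChar_zmod_n]
  have : Invertible (2 : ZMod p) := invertibleOfNonzero (Ring.two_ne_zero hchar)
  obtain ⟨P, w, hP, hPS⟩ := Matrix.IsSymm.exists_isUnit_det_transpose_mul_mul_eq_diagonal hS
  have hdet : ∏ i, w i = P.det ^ 2 * S.det := by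
    rw [← det_diagonal, ← hPS, det_mul, det_mul, det_transpose]
    ring
  have hw : ∀ i, w i ≠ 0 := by
    have : ∏ i, w i ≠ 0 := hdet ▸ mul_ne_zero (pow_ne_zero _ hP.ne_zero) hSdet.ne_zero
    exact fun i => prod_ne_zero_iff.mp this i (mem_univ i)
  have hcount : Fintype.card {x // x ⬝ᵥ S *ᵥ x = 0} =
      Fintype.card {x : Fin m → ZMod p // ∑ i, w i * x i ^ 2 = 0} := by
    rw [← card_dotProduct_transpose_mul_mul_mulVec_eq_zero S hP, hPS]
    exact Fintype.card_congr (Equiv.subtypeEquivRight fun x => by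
      rw [dotProduct_diagonal_mulVec_self])
  have hχ : legendreSym p (((-1 : ZMod p) ^ (m / 2) * S.det).val) =
      quadraticChar (ZMod p) ((-1) ^ (m / 2) * ∏ i, w i) := by
    rw [hdet, mul_left_comm, map_mul, quadraticChar_sq_one' hP.ne_zero, one_mul]
    simp [legendreSym]
  obtain ⟨k, rfl⟩ := hm
  have hk : (k + k) / 2 = k := by omega
  obtain ⟨j, rfl⟩ : ∃ j, k = j + 1 := Nat.exists_eq_succ_of_ne_zero (by omega)
  have hcard := card_sum_mul_sq_eq_zero hchar (k := j + 1) (by rw [Fintype.card_fin]; ring) hw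
  rw [ZMod.card, ← hcount] at hcard
  rw [hχ, hk, Nat.add_sub_cancel]
  apply mul_right_cancel₀ (Nat.cast_ne_zero.mpr (Fact.out : p.Prime).ne_zero : (p : ℤ) ≠ 0)
  rw [hcard]
  ring
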